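/- arXiv:1205.5136 — 3 statements merged into one kernel-verified Lean document; each statement's English description precedes it below -/
import Mathlib

section
/- Subadditivity of the smooth conditional max-entropy: for random variables X, Y, Z on finite sets and ε, ε' ≥ 0 with ε + ε' < 1, H_max^{ε+ε'}(X,Y | Z) ≤ H_max^{ε}(X | Z) + H_max^{ε'}(Y | X,Z). -/
open scoped Classical
open Finset Real

/-- Probability of event `E` under distribution `p` on sample space `Ω`. -/
noncomputable def prE {Ω : Type*} [Fintype Ω] (p : Ω → ℝ) (E : Finset Ω) : ℝ :=
  ∑ ω ∈ E, p ω

/-- Sub-normalized joint mass P(f = a, g = b, Ω-event E); note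
`P_Y(b) · P_{XΩ|Y=b}(a) = P(X=a, Y=b, E)` under the paper's conventions. -/
noncomputable def jointE {Ω A B : Type*} [Fintype Ω] (p : Ω → ℝ) (f : Ω → A) (g : Ω → B)
    (E : Finset Ω) (a : A) (b : B) : ℝ :=
  ∑ ω ∈ E, if f ω = a ∧ g ω = b then p ω else 0

/-- Smooth conditional min-entropy
`H_min^ε(f|g) = max_{Ω : Pr[Ω] ≥ 1-ε} −log₂ ∑_b P_g(b) max_a P_{fΩ|g=b}(a)`. -/
noncomputable def HminSm {Ω A B : Type*} [Fintype Ω] [Fintype A] [Fintype B] [Nonempty A]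
    (p : Ω → ℝ) (f : Ω → A) (g : Ω → B) (ε : ℝ) : ℝ :=
  sSup { r | ∃ E : Finset Ω, 1 - ε ≤ prE p E ∧
    r = -Real.logb 2 (∑ b : B,
      Finset.univ.sup' Finset.univ_nonempty (fun a => jointE p f g E a b)) }

/-- Smooth conditional max-entropy
`H_max^ε(f|g) = min_{Ω : Pr[Ω] ≥ 1-ε} max_b log₂ |supp P_{fΩ|g=b}|`. -/
noncomputable def HmaxSm {Ω A B : Type*} [Fintype Ω] [Fintype A] [Fintype B] [Nonempty B]
    (p : Ω → ℝ) (f : Ω → A) (g : Ω → B) (ε : ℝ) : ℝ :=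
  sInf { r | ∃ E : Finset Ω, 1 - ε ≤ prE p E ∧
    r = Finset.univ.sup' Finset.univ_nonempty (fun b =>
      Real.logb 2 ((Finset.univ.filter (fun a => 0 < jointE p f g E a b)).card)) }

/-- `p` is a probability distribution. -/
def IsDist {Ω : Type*} [Fintype Ω] (p : Ω → ℝ) : Prop :=
  (∀ ω, 0 ≤ p ω) ∧ ∑ ω, p ω = 1

/-! The two smoothed entropies are attained by events `E₁` and `E₂`, and `E₁ ∩ E₂` has
probability at least `1 - ε - ε'`. Given `z`, every pair `(x, y)` in the support of `(X, Y)` on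
`E₁ ∩ E₂` has `x` in the support of `X` on `E₁` and `y` in the support of `Y` given `(x, z)` on
`E₂`, so the sizes of the supports multiply and their logarithms add. -/

/-- `supp P_{fΩ|g=b}` for the event `Ω = E`. -/
noncomputable def condSupport {Ω A B : Type*} [Fintype Ω] [Fintype A] (p : Ω → ℝ) (f : Ω → A)
    (g : Ω → B) (E : Finset Ω) (b : B) : Finset A :=
  Finset.univ.filter (fun a => 0 < jointE p f g E a b)

noncomputable def maxLogCardCondSupport {Ω A B : Type*} [Fintype Ω] [Fintype A] [Fintype B]
    [Nonempty B] (p : Ω → ℝ) (f : Ω → A) (g : Ω → B) (E : Finset Ω) : ℝ :=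
  Finset.univ.sup' Finset.univ_nonempty (fun b => Real.logb 2 (condSupport p f g E b).card)

section Events

variable {Ω : Type*} [Fintype Ω] {p : Ω → ℝ}

lemma prE_le_one (hp : IsDist p) (E : Finset Ω) : prE p E ≤ 1 :=
  hp.2 ▸ Finset.sum_le_sum_of_subset_of_nonneg (Finset.subset_univ E) fun ω _ _ => hp.1 ω

lemma prE_add_prE_sub_one_le_prE_inter (hp : IsDist p) (E₁ E₂ : Finset Ω) :
    prE p E₁ + prE p E₂ - 1 ≤ prE p (E₁ ∩ E₂) := by
  have h := Finset.sum_union_inter (s₁ := E₁) (s₂ := E₂) (f := p)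
  have := prE_le_one hp (E₁ ∪ E₂)
  unfold prE at *
  linarith

end Events

section Support

variable {Ω A B C : Type*} [Fintype Ω] [Fintype A] {p : Ω → ℝ}

lemma mem_condSupport (hp : ∀ ω, 0 ≤ p ω) {f : Ω → A} {g : Ω → B} {E : Finset Ω}
    {a : A} {b : B} :
    a ∈ condSupport p f g E b ↔ ∃ ω ∈ E, f ω = a ∧ g ω = b ∧ 0 < p ω := by
  rw [condSupport, Finset.mem_filter, jointE,
    Finset.sum_pos_iff_of_nonneg fun ω _ => by split_ifs <;> simp [hp ω]]
  simp only [Finset.mem_univ, true_and]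
  refine exists_congr fun ω => and_congr_right fun _ => ?_
  split_ifs with h
  · simp [h]
  · simp only [lt_irrefl, false_iff]
    tauto

lemma condSupport_pair_inter_subset [Fintype C] (hp : ∀ ω, 0 ≤ p ω) (f : Ω → A) (h : Ω → C)
    (g : Ω → B) (E₁ E₂ : Finset Ω) (b : B) :
    condSupport p (fun ω => (f ω, h ω)) g (E₁ ∩ E₂) b ⊆
      (condSupport p f g E₁ b).biUnion fun a =>
        (condSupport p h (fun ω => (f ω, g ω)) E₂ (a, b)).image (Prod.mk a) := by
  rintro ⟨a, c⟩ hac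
  obtain ⟨ω, hω, hfh, hg, hpω⟩ := (mem_condSupport hp).1 hac
  obtain ⟨hω₁, hω₂⟩ := Finset.mem_inter.1 hω
  simp only [Prod.mk.injEq] at hfh
  simp only [Finset.mem_biUnion, Finset.mem_image, mem_condSupport hp, Prod.mk.injEq]
  exact ⟨a, ⟨ω, hω₁, hfh.1, hg, hpω⟩, c, ⟨ω, hω₂, hfh.2, ⟨hfh.1, hg⟩, hpω⟩, rfl, rfl⟩

end Support

section MaxLogCard

variable {Ω A B : Type*} [Fintype Ω] [Fintype A] [Fintype B] [Nonempty B]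
  {p : Ω → ℝ} (f : Ω → A) (g : Ω → B)

lemma maxLogCardCondSupport_nonneg (E : Finset Ω) : 0 ≤ maxLogCardCondSupport p f g E :=
  calc 0 ≤ Real.logb 2 (condSupport p f g E (Classical.arbitrary B)).card :=
        div_nonneg (Real.log_natCast_nonneg _) (Real.log_nonneg one_le_two)
    _ ≤ _ := Finset.le_sup' (fun b => Real.logb 2 (condSupport p f g E b).card) (mem_univ _)

lemma card_condSupport_le_rpow (E : Finset Ω) (b : B) :
    ((condSupport p f g E b).card : ℝ) ≤ 2 ^ maxLogCardCondSupport p f g E := by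
  rcases Nat.eq_zero_or_pos (condSupport p f g E b).card with h | h
  · rw [h, Nat.cast_zero]
    positivity
  · rw [← Real.logb_le_iff_le_rpow one_lt_two (by exact_mod_cast h)]
    exact Finset.le_sup' (fun b => Real.logb 2 (condSupport p f g E b).card) (mem_univ b)

lemma maxLogCardCondSupport_le {E : Finset Ω} {r : ℝ} (hr : 0 ≤ r)
    (h : ∀ b, ((condSupport p f g E b).card : ℝ) ≤ 2 ^ r) :
    maxLogCardCondSupport p f g E ≤ r := by
  refine Finset.sup'_le _ _ fun b _ => ?_
  rcases Nat.eq_zero_or_pos (condSupport p f g E b).card with h0 | h0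
  · simpa [h0] using hr
  · exact (Real.logb_le_iff_le_rpow one_lt_two (by exact_mod_cast h0)).2 (h b)

lemma HmaxSm_le_maxLogCardCondSupport {ε : ℝ} {E : Finset Ω} (hE : 1 - ε ≤ prE p E) :
    HmaxSm p f g ε ≤ maxLogCardCondSupport p f g E :=
  csInf_le ⟨0, by rintro _ ⟨E', -, rfl⟩; exact maxLogCardCondSupport_nonneg f g E'⟩ ⟨E, hE, rfl⟩

/-- There are finitely many events, so the infimum defining `HmaxSm` is attained. -/
lemma exists_HmaxSm_eq (hp : IsDist p) {ε : ℝ} (hε : 0 ≤ ε) :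
    ∃ E : Finset Ω, 1 - ε ≤ prE p E ∧ HmaxSm p f g ε = maxLogCardCondSupport p f g E := by
  let S := { r | ∃ E : Finset Ω, 1 - ε ≤ prE p E ∧ r = maxLogCardCondSupport p f g E }
  have hne : S.Nonempty := ⟨_, Finset.univ, by rw [prE, hp.2]; linarith, rfl⟩
  have hfin : S.Finite := (Set.finite_range _).subset (by rintro _ ⟨E, -, rfl⟩; exact ⟨E, rfl⟩)
  exact hne.csInf_mem hfin

end MaxLogCard

lemma maxLogCardCondSupport_pair_inter_le {Ω A B C : Type*} [Fintype Ω] [Fintype A] [Fintype B]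
    [Fintype C] [Nonempty A] [Nonempty B] {p : Ω → ℝ} (hp : ∀ ω, 0 ≤ p ω)
    (f : Ω → A) (h : Ω → C) (g : Ω → B) (E₁ E₂ : Finset Ω) :
    maxLogCardCondSupport p (fun ω => (f ω, h ω)) g (E₁ ∩ E₂) ≤
      maxLogCardCondSupport p f g E₁ + maxLogCardCondSupport p h (fun ω => (f ω, g ω)) E₂ := by
  set r₁ := maxLogCardCondSupport p f g E₁
  set r₂ := maxLogCardCondSupport p h (fun ω => (f ω, g ω)) E₂
  refine maxLogCardCondSupport_le _ _
    (add_nonneg (maxLogCardCondSupport_nonneg ..) (maxLogCardCondSupport_nonneg ..)) fun b => ?_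
  calc ((condSupport p (fun ω => (f ω, h ω)) g (E₁ ∩ E₂) b).card : ℝ)
      ≤ ∑ a ∈ condSupport p f g E₁ b,
          ((condSupport p h (fun ω => (f ω, g ω)) E₂ (a, b)).card : ℝ) := by
        exact_mod_cast (card_le_card (condSupport_pair_inter_subset hp f h g E₁ E₂ b)).trans
          (card_biUnion_le.trans (sum_le_sum fun a _ => card_image_le))
    _ ≤ ∑ _a ∈ condSupport p f g E₁ b, (2 : ℝ) ^ r₂ :=
        sum_le_sum fun a _ => card_condSupport_le_rpow h _ E₂ (a, b)
    _ = (condSupport p f g E₁ b).card * (2 : ℝ) ^ r₂ := by rw [sum_const, nsmul_eq_mul]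
    _ ≤ 2 ^ r₁ * 2 ^ r₂ := by gcongr; exact card_condSupport_le_rpow f g E₁ b
    _ = 2 ^ (r₁ + r₂) := (Real.rpow_add two_pos r₁ r₂).symm

theorem statement6_general {Ω X Y Z : Type*} [Fintype Ω]
    [Fintype X] [Fintype Y] [Fintype Z] [Nonempty X] [Nonempty Z]
    (p : Ω → ℝ) (hp : IsDist p)
    (fX : Ω → X) (fY : Ω → Y) (fZ : Ω → Z)
    (ε ε' : ℝ) (hε : 0 ≤ ε) (hε' : 0 ≤ ε') :
    HmaxSm p (fun ω => (fX ω, fY ω)) fZ (ε + ε') ≤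
      HmaxSm p fX fZ ε + HmaxSm p fY (fun ω => (fX ω, fZ ω)) ε' := by
  obtain ⟨E₁, hE₁, h₁⟩ := exists_HmaxSm_eq fX fZ hp hε
  obtain ⟨E₂, hE₂, h₂⟩ := exists_HmaxSm_eq fY (fun ω => (fX ω, fZ ω)) hp hε'
  have hE : 1 - (ε + ε') ≤ prE p (E₁ ∩ E₂) := by
    linarith [prE_add_prE_sub_one_le_prE_inter hp E₁ E₂]
  rw [h₁, h₂]
  exact (HmaxSm_le_maxLogCardCondSupport _ _ hE).trans
    (maxLogCardCondSupport_pair_inter_le hp.1 fX fY fZ E₁ E₂)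

/-- Subadditivity of smooth conditional max-entropy:
`H_max^{ε+ε'}(X,Y | Z) ≤ H_max^{ε}(X | Z) + H_max^{ε'}(Y | X,Z)`. -/
theorem statement6 {Ω X Y Z : Type*} [Fintype Ω]
    [Fintype X] [Fintype Y] [Fintype Z] [Nonempty X] [Nonempty Y] [Nonempty Z]
    (p : Ω → ℝ) (hp : IsDist p)
    (fX : Ω → X) (fY : Ω → Y) (fZ : Ω → Z)
    (ε ε' : ℝ) (hε : 0 ≤ ε) (hε' : 0 ≤ ε') (hsum : ε + ε' < 1) :
    HmaxSm p (fun ω => (fX ω, fY ω)) fZ (ε + ε') ≤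
      HmaxSm p fX fZ ε + HmaxSm p fY (fun ω => (fX ω, fZ ω)) ε' :=
  statement6_general p hp fX fY fZ ε ε' hε hε'
end

section
/- Data processing inequality for smooth conditional max-entropy: if X, Y, Z are random variables on finite sets with X — Y — Z a Markov chain and ε ∈ [0,1), then H_max^{ε}(X | Y) ≤ H_max^{ε}(X | Y,Z). -/
open scoped Classical
open Finset Real

/-- Distribution of the random variable `f` under `p`. -/
noncomputable def pr {Ω A : Type*} [Fintype Ω] (p : Ω → ℝ) (f : Ω → A) (a : A) : ℝ :=
  ∑ ω, if f ω = a then p ω else 0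


private lemma logb_nat_nonneg (n : ℕ) : 0 ≤ Real.logb 2 n := by
  rcases Nat.eq_zero_or_pos n with h | h
  · simp [h]
  · exact Real.logb_nonneg one_lt_two (by exact_mod_cast h)

private lemma logb_nat_mono {n m : ℕ} (h : n ≤ m) : Real.logb 2 (n : ℝ) ≤ Real.logb 2 m := by
  rcases Nat.eq_zero_or_pos n with h0 | h0
  · simpa [h0] using logb_nat_nonneg m
  · exact Real.logb_le_logb_of_le one_lt_two (by exact_mod_cast h0) (by exact_mod_cast h)

private lemma jointE_nonneg {Ω A B : Type*} [Fintype Ω] (p : Ω → ℝ) (hp0 : ∀ ω, 0 ≤ p ω)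
    (f : Ω → A) (g : Ω → B) (E : Finset Ω) (a : A) (b : B) : 0 ≤ jointE p f g E a b := by
  apply Finset.sum_nonneg
  intro ω _
  split <;> simp [hp0 ω]

private lemma sum_jointE {Ω A B : Type*} [Fintype Ω] [Fintype A] [Fintype B]
    (p : Ω → ℝ) (f : Ω → A) (g : Ω → B) (E : Finset Ω) :
    ∑ b : B, ∑ a : A, jointE p f g E a b = prE p E := by
  classical
  unfold jointE prE
  rw [Finset.sum_comm]
  rw [show (∑ a : A, ∑ b : B, ∑ ω ∈ E, if f ω = a ∧ g ω = b then p ω else 0)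
      = ∑ ω ∈ E, ∑ a : A, ∑ b : B, if f ω = a ∧ g ω = b then p ω else 0 by
    exact (Finset.sum_congr rfl fun a _ => Finset.sum_comm).trans Finset.sum_comm]
  apply Finset.sum_congr rfl
  intro ω _
  simp [ite_and, Finset.sum_ite_eq]


private lemma pr_nonneg {Ω A : Type*} [Fintype Ω] (p : Ω → ℝ) (hp0 : ∀ ω, 0 ≤ p ω)
    (f : Ω → A) (a : A) : 0 ≤ pr p f a := by
  apply Finset.sum_nonneg
  intro ω _
  split <;> simp [hp0 ω]

/-- Data processing for smooth conditional max-entropy: if X — Y — Z is a Markov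
chain, then `H_max^ε(X | Y) ≤ H_max^ε(X | Y,Z)`. -/
theorem statement10 {Ω X Y Z : Type*} [Fintype Ω]
    [Fintype X] [Fintype Y] [Fintype Z] [Nonempty X] [Nonempty Y] [Nonempty Z]
    (p : Ω → ℝ) (hp : IsDist p)
    (fX : Ω → X) (fY : Ω → Y) (fZ : Ω → Z)
    (hMarkov : ∀ (x : X) (y : Y) (z : Z),
      pr p (fun ω => (fX ω, fY ω, fZ ω)) (x, y, z) * pr p fY y
      = pr p (fun ω => (fX ω, fY ω)) (x, y) * pr p (fun ω => (fY ω, fZ ω)) (y, z))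
    (ε : ℝ) (hε0 : 0 ≤ ε) (hε1 : ε < 1) :
    HmaxSm p fX fY ε ≤ HmaxSm p fX (fun ω => (fY ω, fZ ω)) ε := by
  classical
  obtain ⟨hp0, hp1⟩ := hp
  set g : Ω → Y × Z := fun ω => (fY ω, fZ ω) with hgdef
  unfold HmaxSm
  apply le_csInf
  · refine ⟨_, Finset.univ, ?_, rfl⟩
    have : prE p (Finset.univ : Finset Ω) = 1 := hp1
    rw [this]; linarith
  rintro r ⟨E, hE, rfl⟩
  set T : Y → Z → Finset X := fun y z =>
      Finset.univ.filter (fun a => 0 < jointE p fX g E a (y, z)) with hTdef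
  set P2 : X → Y → ℝ := fun x y => pr p (fun ω => (fX ω, fY ω)) (x, y) with hP2
  set P3 : X → Y → Z → ℝ := fun x y z => pr p (fun ω => (fX ω, fY ω, fZ ω)) (x, y, z) with hP3
  set PY : Y → ℝ := fun y => pr p fY y with hPY
  set PYZ : Y → Z → ℝ := fun y z => pr p g (y, z) with hPYZ
  set Q : Y → Z → ℝ := fun y z => ∑ x ∈ T y z, P2 x y with hQ
  have hz : ∀ y : Y, ∃ z : Z, ∀ z' : Z, Q y z' ≤ Q y z := by
    intro y
    obtain ⟨z, _, hzmax⟩ :=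
      Finset.exists_max_image Finset.univ (fun z => Q y z) Finset.univ_nonempty
    exact ⟨z, fun z' => hzmax z' (Finset.mem_univ _)⟩
  choose zsel hzsel using hz
  set F : Finset Ω := Finset.univ.filter (fun ω => fX ω ∈ T (fY ω) (zsel (fY ω))) with hFdef
  have hP2nonneg : ∀ x y, 0 ≤ P2 x y := fun x y => pr_nonneg p hp0 _ _
  have hQnonneg : ∀ y z, 0 ≤ Q y z := fun y z =>
    Finset.sum_nonneg fun x _ => hP2nonneg x y
  have hPYnonneg : ∀ y, 0 ≤ PY y := fun y => pr_nonneg p hp0 _ _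
  have hPYZnonneg : ∀ y z, 0 ≤ PYZ y z := fun y z => pr_nonneg p hp0 _ _
  have hP3le : ∀ x y z, P3 x y z ≤ PY y := by
    intro x y z
    rw [hP3, hPY]
    apply Finset.sum_le_sum
    intro ω _
    by_cases h : fY ω = y
    · simp only [h, if_true]
      split <;> simp [hp0 ω]
    · simp [Prod.mk.injEq, h]
  have hjle3 : ∀ x y z, jointE p fX g E x (y, z) ≤ P3 x y z := by
    intro x y z
    rw [hP3]
    refine le_trans (Finset.sum_le_sum_of_subset_of_nonneg (Finset.subset_univ E)
      (fun ω _ _ => by split <;> simp [hp0 ω]) ) (le_of_eq ?_)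
    apply Finset.sum_congr rfl
    intro ω _
    simp [hgdef, Prod.mk.injEq, and_assoc]
  have hMsum : ∀ (S : Finset X) (y : Y) (z : Z),
      (∑ x ∈ S, P3 x y z) * PY y = (∑ x ∈ S, P2 x y) * PYZ y z := by
    intro S y z
    rw [Finset.sum_mul, Finset.sum_mul]
    exact Finset.sum_congr rfl fun x _ => hMarkov x y z
  have hPYZsum : ∀ y, ∑ z, PYZ y z = PY y := by
    intro y
    rw [hPY]
    simp only [hPYZ, pr, hgdef]
    rw [Finset.sum_comm]
    apply Finset.sum_congr rfl
    intro ω _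
    simp [Prod.mk.injEq, ite_and, Finset.sum_ite_eq]
  have key_y : ∀ y, (∑ z, ∑ x ∈ T y z, P3 x y z) ≤ Q y (zsel y) := by
    intro y
    rcases eq_or_lt_of_le (hPYnonneg y) with hPYy | hPYy
    · have hz0 : ∀ z, ∑ x ∈ T y z, P3 x y z = 0 := fun z =>
        Finset.sum_eq_zero fun x _ =>
          le_antisymm ((hP3le x y z).trans hPYy.symm.le) (pr_nonneg p hp0 _ _)
      simp only [hz0, Finset.sum_const_zero]
      exact hQnonneg y (zsel y)
    · apply le_of_mul_le_mul_right ?_ hPYy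
      calc (∑ z, ∑ x ∈ T y z, P3 x y z) * PY y
          = ∑ z, (∑ x ∈ T y z, P3 x y z) * PY y := by rw [Finset.sum_mul]
        _ = ∑ z, Q y z * PYZ y z := Finset.sum_congr rfl fun z _ => hMsum _ y z
        _ ≤ ∑ z, Q y (zsel y) * PYZ y z := Finset.sum_le_sum fun z _ =>
            mul_le_mul_of_nonneg_right (hzsel y z) (hPYZnonneg y z)
        _ = Q y (zsel y) * PY y := by rw [← Finset.mul_sum, hPYZsum y]
  have hFexp : ∑ y : Y, Q y (zsel y) = prE p F := by
    have h1 : ∀ y, Q y (zsel y) = ∑ ω : Ω, if fX ω ∈ T y (zsel y) ∧ fY ω = y then p ω else 0 := by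
      intro y
      rw [hQ]
      simp only [hP2, pr]
      rw [Finset.sum_comm]
      apply Finset.sum_congr rfl
      intro ω _
      simp [Prod.mk.injEq, ite_and, Finset.sum_ite_eq]
    rw [Finset.sum_congr rfl fun y _ => h1 y, Finset.sum_comm]
    rw [prE, hFdef, Finset.sum_filter]
    apply Finset.sum_congr rfl
    intro ω _
    rw [show (fun y => if fX ω ∈ T y (zsel y) ∧ fY ω = y then p ω else 0)
        = fun y => if fY ω = y then (if fX ω ∈ T y (zsel y) then p ω else 0) else 0 from by
      funext y
      by_cases h : fY ω = y <;> simp [h]]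
    rw [Finset.sum_ite_eq]
    simp
  have key1 : prE p E ≤ prE p F := by
    have hEexp : prE p E = ∑ y : Y, ∑ z : Z, ∑ x : X, jointE p fX g E x (y, z) := by
      rw [← sum_jointE p fX g E, Fintype.sum_prod_type]
    rw [hEexp, ← hFexp]
    apply Finset.sum_le_sum
    intro y _
    refine le_trans (Finset.sum_le_sum fun z _ => ?_) (key_y y)
    have hrestr : ∑ x : X, jointE p fX g E x (y, z) = ∑ x ∈ T y z, jointE p fX g E x (y, z) := by
      symm
      apply Finset.sum_subset (Finset.subset_univ _)
      intro x _ hx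
      rw [hTdef] at hx
      simp only [Finset.mem_filter, Finset.mem_univ, true_and, not_lt] at hx
      exact le_antisymm hx (jointE_nonneg p hp0 fX g E x (y, z))
    rw [hrestr]
    exact Finset.sum_le_sum fun x _ => hjle3 x y z
  refine csInf_le_of_le ?_ ⟨F, le_trans hE key1, rfl⟩ ?_
  · refine ⟨0, ?_⟩
    rintro r ⟨E', _, rfl⟩
    obtain ⟨y0⟩ := (inferInstance : Nonempty Y)
    exact le_trans (logb_nat_nonneg ((Finset.univ.filter (fun a => 0 < jointE p fX fY E' a y0)).card))
      (Finset.le_sup' (fun b => Real.logb 2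
        (((Finset.univ.filter (fun a => 0 < jointE p fX fY E' a b)).card : ℕ) : ℝ))
        (Finset.mem_univ y0))
  · apply Finset.sup'_le
    intro y _
    refine le_trans ?_ (Finset.le_sup' _ (Finset.mem_univ (y, zsel y)))
    apply logb_nat_mono
    have hsub : Finset.univ.filter (fun a => 0 < jointE p fX fY F a y) ⊆ T y (zsel y) := by
      intro a ha
      simp only [Finset.mem_filter, Finset.mem_univ, true_and] at ha
      obtain ⟨ω, hωF, hne⟩ := Finset.exists_ne_zero_of_sum_ne_zero (ne_of_gt ha)
      have hcond : fX ω = a ∧ fY ω = y := by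
        by_contra h
        rw [if_neg h] at hne
        exact hne rfl
      rw [hFdef] at hωF
      simp only [Finset.mem_filter, Finset.mem_univ, true_and] at hωF
      rw [hcond.1, hcond.2] at hωF
      exact hωF
    calc (Finset.univ.filter (fun a => 0 < jointE p fX fY F a y)).card
        ≤ (T y (zsel y)).card := Finset.card_le_card hsub
      _ = (Finset.univ.filter (fun a => 0 < jointE p fX g E a (y, zsel y))).card := by rw [hTdef]
end

section
/- Block sampling bound: let y ∈ {0,1}^m be a bit string with m = bκ grouped into κ blocks of size b, let t be a uniformly random subset of [κ] of size ακ (α ∈ [0,1/2]), 𝒯 the corresponding set of bit positions and 𝒯̄ its complement, and let 𝒯' ⊆ 𝒯 include each element of 𝒯 independently with probability 1/2. Then for any δ > 0, Pr[ (1/|𝒯'|)·∑_{i∈𝒯'} y_i ≤ (1/((1−α)m))·∑_{i∈𝒯̄} y_i − δ ] ≤ 3·exp(−(1/2−ε)·α·κ·δ²/8) (with ε as in the paper's parameterization; in particular the probability is at most 3·exp(−ακδ²/16) when ε ≤ 1/4). -/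
/-!
Call a choice `t` of test blocks bad when its blocks carry noticeably less weight than the
average block: `∑ j ∈ t, w j ≤ r * (mean w - b * δ / 4)`. By Maclaurin's inequality
`e_r(x) ≤ C(n, r) * (mean x) ^ r`, the exponential moment of a sum of `r` block weights sampled
without replacement is at most the `r`-th power of that of a single block, so Hoeffding's lemma
bounds the fraction of bad `t` by `exp (-(r * δ ^ 2) / 8)`. For a good `t`, since the test blocks
are at most half of all blocks, the test positions exceed the threshold (mean on the complement
minus `δ`) by `r * b * δ / 2` in total, and a Chernoff bound for the independent fair coins bounds
the fraction of coin vectors whose subsample mean falls to the threshold by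
`exp (-(r * b * δ ^ 2) / 8)`. Both failure modes together give `2 * exp (-(r * δ ^ 2) / 8)`.
-/

open scoped Classical
open Finset

noncomputable def wgt {ι : Type*} (y : ι → Bool) (S : Finset ι) : ℝ :=
  ∑ i ∈ S, if y i then (1 : ℝ) else 0

open Real ProbabilityTheory MeasureTheory

theorem sum_exp_mul_div_card_le {ι : Type*} [Fintype ι] (f : ι → ℝ) {a b : ℝ}
    (hf : ∀ i, f i ∈ Set.Icc a b) (s : ℝ) :
    (∑ i, exp (s * f i)) / Fintype.card ι ≤
      exp (s * ((∑ i, f i) / Fintype.card ι) + (b - a) ^ 2 * s ^ 2 / 8) := by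
  cases isEmpty_or_nonempty ι
  · simp [exp_nonneg]
  let _ : MeasurableSpace ι := ⊤
  set μ := (PMF.uniformOfFintype ι).toMeasure
  set m := (∑ i, f i) / Fintype.card ι
  have hn : (0 : ℝ) < Fintype.card ι := by exact_mod_cast Fintype.card_pos
  have hmean : μ[f] = m := by
    simp [μ, m, PMF.integral_eq_sum, ← mul_sum, div_eq_inv_mul]
  have h := (hasSubgaussianMGF_of_mem_Icc (μ := μ) (measurable_of_countable f).aemeasurable
    (ae_of_all _ hf)).mgf_le s
  have hc : (((‖b - a‖₊ / 2) ^ 2 : NNReal) : ℝ) = (b - a) ^ 2 / 4 := by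
    simp [div_pow, sq_abs]; norm_num
  rw [mgf, PMF.integral_eq_sum, hmean, hc] at h
  simp only [PMF.uniformOfFintype_apply, smul_eq_mul, ENNReal.toReal_inv,
    ENNReal.toReal_natCast, ← div_eq_inv_mul, ← sum_div] at h
  have hsplit : ∀ i, exp (s * f i) = exp (s * m) * exp (s * (f i - m)) := by
    intro i; rw [← exp_add]; ring_nf
  rw [sum_congr rfl fun i _ => hsplit i, ← mul_sum, mul_div_assoc, exp_add]
  gcongr
  rwa [show (b - a) ^ 2 * s ^ 2 / 8 = (b - a) ^ 2 / 4 * s ^ 2 / 2 by ring]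

theorem one_add_exp_le (x : ℝ) : 1 + exp x ≤ 2 * exp (x / 2 + x ^ 2 / 8) := by
  have h := cosh_le_exp_half_sq (x / 2)
  rw [cosh_eq] at h
  calc 1 + exp x = exp (x / 2) * (exp (x / 2) + exp (-(x / 2))) := by
        rw [mul_add, ← exp_add, ← exp_add]; ring_nf; simp [add_comm]
    _ ≤ exp (x / 2) * (2 * exp ((x / 2) ^ 2 / 2)) := by gcongr; linarith
    _ = 2 * exp (x / 2 + x ^ 2 / 8) := by rw [mul_left_comm, ← exp_add]; ring_nf

theorem sum_exp_mul_sum_filter_le {ι : Type*} [Fintype ι] [DecidableEq ι] (v : ι → ℝ) (s : ℝ) :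
    ∑ c : ι → Bool, exp (s * ∑ i with c i, v i) ≤
      2 ^ Fintype.card ι * exp (s * (∑ i, v i) / 2 + s ^ 2 * (∑ i, v i ^ 2) / 8) := by
  have hprod : ∀ c : ι → Bool,
      exp (s * ∑ i with c i, v i) = ∏ i, if c i then exp (s * v i) else 1 := by
    intro c
    rw [mul_sum, exp_sum, prod_filter]
  calc ∑ c : ι → Bool, exp (s * ∑ i with c i, v i)
      = ∏ i, (1 + exp (s * v i)) := by
        simp only [hprod]
        rw [← Fintype.prod_sum fun i (β : Bool) => if β then exp (s * v i) else 1]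
        simp [add_comm]
    _ ≤ ∏ i, (2 * exp (s * v i / 2 + (s * v i) ^ 2 / 8)) :=
        prod_le_prod (fun i _ => by positivity) fun i _ => one_add_exp_le _
    _ = _ := by
        rw [prod_mul_distrib, ← exp_sum, prod_const, card_univ]
        congr 2
        rw [sum_add_distrib, ← sum_div, ← sum_div, ← mul_sum]
        simp only [mul_pow, ← mul_sum]

theorem Multiset.esymm_cons_succ {R : Type*} [CommSemiring R] (a : R) (s : Multiset R) (n : ℕ) :
    (a ::ₘ s).esymm (n + 1) = s.esymm (n + 1) + a * s.esymm n := by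
  simp [Multiset.esymm, Multiset.powersetCard_cons, Multiset.sum_map_mul_left]

/-- The induction step of Maclaurin's inequality, from `k` numbers of mean `A` to `k + 1` numbers:
Bernoulli's inequality for `((k + 1) * A + (x - A)) ^ (m + 1)`. -/
theorem choose_mul_pow_add_le (k m : ℕ) {A x : ℝ} (hA : 0 ≤ A) (hx : 0 ≤ x) :
    (k.choose (m + 1) : ℝ) * A ^ (m + 1) + x * ((k.choose m : ℝ) * A ^ m) ≤
      ((k + 1).choose (m + 1) : ℝ) * ((k * A + x) / (k + 1)) ^ (m + 1) := by
  have hbern := pow_add_mul_le_add_pow (a := ((k : ℝ) + 1) * A) (b := x - A) (by positivity)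
    (by nlinarith) (m + 1)
  have hsucc : ((k + 1).choose (m + 1) : ℝ) * (m + 1) = (k + 1) * k.choose m := by
    exact_mod_cast (Nat.add_one_mul_choose_eq k m).symm
  have hpascal : ((k + 1).choose (m + 1) : ℝ) = k.choose m + k.choose (m + 1) := by
    exact_mod_cast Nat.choose_succ_succ k m
  rw [div_pow, ← mul_div_assoc, le_div_iff₀ (by positivity)]
  rw [Nat.add_sub_cancel, Nat.cast_add_one, mul_pow, mul_pow] at hbern
  calc ((k.choose (m + 1) : ℝ) * A ^ (m + 1) + x * ((k.choose m : ℝ) * A ^ m)) * (k + 1) ^ (m + 1)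
      = ((k + 1).choose (m + 1) : ℝ) *
          ((k + 1) ^ (m + 1) * A ^ (m + 1) + (m + 1) * ((k + 1) ^ m * A ^ m) * (x - A)) := by
        linear_combination (-(k + 1 : ℝ) ^ m * A ^ m * (x - A)) * hsucc
          - ((k + 1 : ℝ) ^ (m + 1) * A ^ (m + 1)) * hpascal
    _ ≤ ((k + 1).choose (m + 1) : ℝ) * ((k + 1) * A + (x - A)) ^ (m + 1) := by gcongr
    _ = ((k + 1).choose (m + 1) : ℝ) * (k * A + x) ^ (m + 1) := by ring

theorem Multiset.esymm_le_choose_mul_mean_pow (s : Multiset ℝ) (hs : ∀ x ∈ s, 0 ≤ x) (r : ℕ) :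
    s.esymm r ≤ (card s).choose r * (s.sum / card s) ^ r := by
  induction s using Multiset.induction_on generalizing r with
  | empty => cases r <;> simp [Multiset.esymm, Multiset.powersetCard_zero_right]
  | cons a s ih =>
    have hs' : ∀ x ∈ s, 0 ≤ x := fun x hx => hs x (Multiset.mem_cons_of_mem hx)
    cases r with
    | zero => simp [Multiset.esymm]
    | succ m =>
      set k := card s
      set A := s.sum / k
      have hA : 0 ≤ A := div_nonneg (Multiset.sum_nonneg hs') (Nat.cast_nonneg _)
      have hsum : s.sum = k * A := (mul_div_cancel_of_imp' fun hk => by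
        simp [Multiset.card_eq_zero.mp (Nat.cast_eq_zero.mp hk)]).symm
      rw [Multiset.esymm_cons_succ, Multiset.card_cons, Multiset.sum_cons, hsum, add_comm a,
        Nat.cast_add_one]
      calc s.esymm (m + 1) + a * s.esymm m
          ≤ (k.choose (m + 1) : ℝ) * A ^ (m + 1) + a * ((k.choose m : ℝ) * A ^ m) := by
            gcongr
            · exact ih hs' (m + 1)
            · exact hs a (Multiset.mem_cons_self a s)
            · exact ih hs' m
        _ ≤ _ := choose_mul_pow_add_le k m hA (hs a (Multiset.mem_cons_self a s))

theorem card_filter_le_le_sum_exp {α : Type*} (s : Finset α) (g : α → ℝ) (c : ℝ) {l : ℝ}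
    (hl : 0 ≤ l) : (#{x ∈ s | g x ≤ c} : ℝ) ≤ ∑ x ∈ s, exp (l * (c - g x)) := by
  rw [card_filter, Nat.cast_sum]
  gcongr with x
  split_ifs with h
  · simpa using one_le_exp (mul_nonneg hl (sub_nonneg.2 h))
  · simp [exp_nonneg]

theorem sum_powersetCard_exp_mul_sum_le {ι : Type*} [Fintype ι] (w : ι → ℝ) {a b : ℝ}
    (hw : ∀ i, w i ∈ Set.Icc a b) (r : ℕ) (s : ℝ) :
    ∑ t ∈ powersetCard r univ, exp (s * ∑ i ∈ t, w i) ≤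
      (Fintype.card ι).choose r *
        exp (r * (s * ((∑ i, w i) / Fintype.card ι) + (b - a) ^ 2 * s ^ 2 / 8)) := by
  simp_rw [mul_sum, exp_sum]
  rw [← esymm_map_val, exp_nat_mul]
  calc _ ≤ _ := Multiset.esymm_le_choose_mul_mean_pow _ (by simp [exp_nonneg]) r
    _ = (Fintype.card ι).choose r * ((∑ i, exp (s * w i)) / Fintype.card ι) ^ r := by simp
    _ ≤ _ := by gcongr; exact sum_exp_mul_div_card_le w hw s

theorem card_powersetCard_sum_le_le {ι : Type*} [Fintype ι] (w : ι → ℝ) {a b : ℝ}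
    (hw : ∀ i, w i ∈ Set.Icc a b) (r : ℕ) {ε : ℝ} (hε : 0 ≤ ε) :
    (#{t ∈ powersetCard r univ | ∑ i ∈ t, w i ≤ r * ((∑ i, w i) / Fintype.card ι - ε)} : ℝ) ≤
      (Fintype.card ι).choose r * exp (-(2 * r * ε ^ 2) / (b - a) ^ 2) := by
  set m := (∑ i, w i) / Fintype.card ι
  rcases eq_or_ne (b - a) 0 with hab | hab
  · have := card_filter_le (powersetCard r (univ : Finset ι))
      fun t => ∑ i ∈ t, w i ≤ r * (m - ε)
    rw [card_powersetCard, card_univ] at this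
    simpa [hab] using this
  set l := 4 * ε / (b - a) ^ 2
  calc _ ≤ ∑ t ∈ powersetCard r univ, exp (l * (r * (m - ε) - ∑ i ∈ t, w i)) :=
        card_filter_le_le_sum_exp _ _ _ (by positivity)
    _ = exp (l * (r * (m - ε))) * ∑ t ∈ powersetCard r univ, exp (-l * ∑ i ∈ t, w i) := by
        rw [mul_sum]
        congr! 1 with t
        rw [← exp_add]; ring_nf
    _ ≤ exp (l * (r * (m - ε))) * ((Fintype.card ι).choose r *
          exp (r * (-l * m + (b - a) ^ 2 * (-l) ^ 2 / 8))) := by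
        gcongr; exact sum_powersetCard_exp_mul_sum_le w hw r (-l)
    _ = _ := by
        rw [mul_left_comm, ← exp_add]
        congr 2
        simp only [l]
        field_simp
        ring

theorem wgt_le_card {ι : Type*} (y : ι → Bool) (S : Finset ι) : wgt y S ≤ #S := by
  rw [card_eq_sum_ones, Nat.cast_sum]
  exact sum_le_sum fun i _ => by split_ifs <;> norm_num

theorem wgt_nonneg {ι : Type*} (y : ι → Bool) (S : Finset ι) : 0 ≤ wgt y S :=
  sum_nonneg fun i _ => by split_ifs <;> norm_num

theorem wgt_sub_mul_card_nonpos {ι : Type*} {y : ι → Bool} {S : Finset ι} {θ : ℝ}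
    (h : wgt y S / #S ≤ θ) : wgt y S - θ * #S ≤ 0 := by
  rcases S.eq_empty_or_nonempty with rfl | hS
  · simp [wgt]
  · rw [div_le_iff₀ (by exact_mod_cast hS.card_pos)] at h
    linarith

theorem card_coins_wgt_div_card_le {ι : Type*} [Fintype ι] [DecidableEq ι] (y : ι → Bool)
    (T : Finset ι) {θ : ℝ} (hθ : θ ≤ 1) {l : ℝ} (hl : 0 ≤ l) :
    (#{c : ι → Bool | wgt y {i ∈ T | c i} / #{i ∈ T | c i} ≤ θ} : ℝ) ≤
      2 ^ Fintype.card ι * exp (-(l * (wgt y T - θ * #T)) / 2 + l ^ 2 * #T / 8) := by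
  rcases lt_or_ge θ 0 with hθ0 | hθ0
  · rw [filter_false_of_mem fun c _ =>
      not_le.2 (hθ0.trans_le (div_nonneg (wgt_nonneg _ _) (Nat.cast_nonneg _)))]
    simp only [card_empty, Nat.cast_zero]
    positivity
  set v : ι → ℝ := fun i => if i ∈ T then (if y i then 1 else 0) - θ else 0
  have hv : ∀ c : ι → Bool, ∑ i with c i, v i = wgt y {i ∈ T | c i} - θ * #{i ∈ T | c i} := by
    intro c
    have hT : ({i | c i} : Finset ι) ∩ T = {i ∈ T | c i} := by ext; simp [and_comm]
    simp only [v, sum_ite_mem, hT, sum_sub_distrib, sum_const, nsmul_eq_mul, wgt, mul_comm θ]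
  have hsum : ∑ i, v i = wgt y T - θ * #T := by simpa using hv fun _ => true
  have hsq : ∑ i, v i ^ 2 ≤ #T := by
    rw [card_eq_sum_ones, Nat.cast_sum, ← sum_subset (subset_univ T)
      fun i _ hi => by simp [v, hi]]
    gcongr with i hi
    simp only [v, hi, if_true, Nat.cast_one]
    split_ifs <;> nlinarith
  calc (#{c : ι → Bool | wgt y {i ∈ T | c i} / #{i ∈ T | c i} ≤ θ} : ℝ)
      ≤ #{c : ι → Bool | ∑ i with c i, v i ≤ 0} := by
        refine mod_cast card_le_card fun c hc => ?_
        simp only [mem_filter, mem_univ, true_and, hv] at hc ⊢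
        exact wgt_sub_mul_card_nonpos hc
    _ ≤ ∑ c : ι → Bool, exp (-l * ∑ i with c i, v i) := by
        refine (card_filter_le_le_sum_exp _ _ _ hl).trans_eq ?_
        simp
    _ ≤ _ := (sum_exp_mul_sum_filter_le v (-l)).trans ?_
  rw [hsum, neg_sq]
  gcongr 2 ^ _ * exp ?_
  nlinarith [mul_le_mul_of_nonneg_left hsq (sq_nonneg l)]

/-- `S` and `W` are the weights of `r` test blocks and of all `k` blocks of size `b`; the
conclusion says the test positions exceed the threshold `(W - S) / ((k - r) * b) - δ` by half the
margin `r * b * δ`. -/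
theorem mul_div_two_le_sub_mul {r k b S W δ : ℝ} (hr : 0 ≤ r) (h2r : 2 * r ≤ k) (hb : 0 < b)
    (hδ : 0 ≤ δ) (hS : 0 ≤ S) (hgood : r * (W / k - b * δ / 4) < S) :
    r * b * δ / 2 ≤ S - ((W - S) / ((k - r) * b) - δ) * (r * b) := by
  rcases hr.eq_or_lt with rfl | hr
  · simpa using hS
  have hkr : 0 < k - r := by linarith
  set q := (W - S) / ((k - r) * b)
  have hW : W = S + q * ((k - r) * b) := by simp only [q]; field_simp; ring
  rw [hW, mul_sub, mul_div_assoc', div_sub' (by linarith), div_lt_iff₀ (by linarith)] at hgood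
  nlinarith [mul_pos hr hb, mul_nonneg (mul_nonneg hr.le hb.le) hδ]

section Blocks

variable {κ b : ℕ} (y : Fin κ × Fin b → Bool)

noncomputable def blockWeight (j : Fin κ) : ℝ := wgt y {i | i.1 = j}

theorem card_filter_fst_mem (t : Finset (Fin κ)) :
    #{i : Fin κ × Fin b | i.1 ∈ t} = #t * b := by
  rw [show ({i : Fin κ × Fin b | i.1 ∈ t} : Finset _) = t ×ˢ univ by ext; simp, card_product,
    card_univ, Fintype.card_fin]

theorem blockWeight_mem_Icc (j : Fin κ) : blockWeight y j ∈ Set.Icc 0 (b : ℝ) := by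
  refine ⟨wgt_nonneg _ _, (wgt_le_card _ _).trans ?_⟩
  simpa using (card_filter_fst_mem ({j} : Finset (Fin κ))).le

theorem wgt_filter_fst_mem (t : Finset (Fin κ)) :
    wgt y {i | i.1 ∈ t} = ∑ j ∈ t, blockWeight y j := by
  rw [wgt, ← sum_fiberwise_of_maps_to (g := Prod.fst) (t := t) (fun i hi => by simpa using hi)
    fun i => if y i then (1 : ℝ) else 0]
  refine sum_congr rfl fun j hj => ?_
  rw [blockWeight, wgt, filter_filter]
  congr 1
  ext i
  simp only [mem_filter, mem_univ, true_and, and_iff_right_iff_imp]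
  rintro rfl
  exact hj

theorem wgt_filter_fst_not_mem (t : Finset (Fin κ)) :
    wgt y {i | i.1 ∉ t} = ∑ j, blockWeight y j - ∑ j ∈ t, blockWeight y j := by
  rw [← wgt_filter_fst_mem, ← wgt_filter_fst_mem, eq_sub_iff_add_eq', wgt, wgt, wgt]
  simpa using sum_filter_add_sum_filter_not univ (fun i : Fin κ × Fin b => i.1 ∈ t)
    fun i => if y i then (1 : ℝ) else 0

theorem card_coins_le_of_lt_sum_blockWeight {r : ℕ} {δ : ℝ} (t : Finset (Fin κ)) (ht : #t = r)
    (h2r : 2 * r ≤ κ) (hb : 0 < b) (hδ : 0 ≤ δ)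
    (hgood : r * ((∑ j, blockWeight y j) / κ - b * δ / 4) < ∑ j ∈ t, blockWeight y j) :
    (#{c : Fin κ × Fin b → Bool | wgt y {i | i.1 ∈ t ∧ c i} / #{i | i.1 ∈ t ∧ c i} ≤
        wgt y {i | i.1 ∉ t} / ((κ - r) * b) - δ} : ℝ) ≤ 2 ^ (κ * b) * exp (-(r * δ ^ 2) / 8) := by
  set T : Finset (Fin κ × Fin b) := {i | i.1 ∈ t}
  have hfilter : ∀ c : Fin κ × Fin b → Bool, ({i | i.1 ∈ t ∧ c i} : Finset _) = {i ∈ T | c i} := by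
    intro c; rw [filter_filter]
  have hT : (#T : ℝ) = r * b := by simp [T, card_filter_fst_mem, ht]
  have hrκ : (r : ℝ) ≤ κ := by exact_mod_cast (show r ≤ κ by omega)
  have hθ : wgt y {i | i.1 ∉ t} / ((κ - r) * b) - δ ≤ 1 := by
    have hcompl : #({i | i.1 ∉ t} : Finset (Fin κ × Fin b)) = #tᶜ * b := by
      rw [← card_filter_fst_mem]; simp
    have : wgt y {i | i.1 ∉ t} / ((κ - r) * b) ≤ 1 := by
      refine div_le_one_of_le₀ ((wgt_le_card _ _).trans ?_) (by nlinarith)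
      rw [hcompl, card_compl, Fintype.card_fin, ht]
      push_cast [show r ≤ κ by omega]
      rfl
    linarith
  have hmargin : r * b * δ / 2 ≤
      wgt y T - (wgt y {i | i.1 ∉ t} / ((κ - r) * b) - δ) * (r * b) := by
    rw [wgt_filter_fst_mem, wgt_filter_fst_not_mem]
    exact mul_div_two_le_sub_mul (Nat.cast_nonneg r) (by exact_mod_cast h2r) (by exact_mod_cast hb)
      hδ (sum_nonneg fun j _ => (blockWeight_mem_Icc y j).1) hgood
  simp_rw [hfilter]
  refine (card_coins_wgt_div_card_le y T hθ hδ).trans ?_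
  rw [Fintype.card_prod, Fintype.card_fin, Fintype.card_fin, hT]
  gcongr 2 ^ _ * exp ?_
  have hb1 : (1 : ℝ) ≤ b := by exact_mod_cast hb
  nlinarith [mul_le_mul_of_nonneg_left hmargin hδ, mul_le_mul_of_nonneg_left hb1
    (mul_nonneg (Nat.cast_nonneg r) (sq_nonneg δ))]

theorem card_sum_blockWeight_le_le (r : ℕ) (hb : 0 < b) {δ : ℝ} (hδ : 0 ≤ δ) :
    (#{t ∈ powersetCard r univ |
        ∑ j ∈ t, blockWeight y j ≤ r * ((∑ j, blockWeight y j) / κ - b * δ / 4)} : ℝ) ≤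
      κ.choose r * exp (-(r * δ ^ 2) / 8) := by
  have h := card_powersetCard_sum_le_le (blockWeight y) (blockWeight_mem_Icc y) r
    (ε := b * δ / 4) (by positivity)
  have hb0 : (b : ℝ) ≠ 0 := by positivity
  simp only [Fintype.card_fin, sub_zero] at h
  convert h using 3
  field_simp
  ring

theorem sum_coins_indicator_le {r : ℕ} {δ : ℝ} (t : Finset (Fin κ)) (ht : #t = r)
    (h2r : 2 * r ≤ κ) (hb : 0 < b) (hδ : 0 ≤ δ) :
    ∑ c : Fin κ × Fin b → Bool,
        (if wgt y {i | i.1 ∈ t ∧ c i} / #{i | i.1 ∈ t ∧ c i} ≤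
          wgt y {i | i.1 ∉ t} / ((κ - r) * b) - δ then (1 : ℝ) else 0) ≤
      2 ^ (κ * b) * ((if ∑ j ∈ t, blockWeight y j ≤ r * ((∑ j, blockWeight y j) / κ - b * δ / 4)
        then 1 else 0) + exp (-(r * δ ^ 2) / 8)) := by
  rw [sum_boole]
  split_ifs with hbad
  · have hcard : (#{c : Fin κ × Fin b → Bool | wgt y {i | i.1 ∈ t ∧ c i} / #{i | i.1 ∈ t ∧ c i} ≤
        wgt y {i | i.1 ∉ t} / ((κ - r) * b) - δ} : ℝ) ≤ 2 ^ (κ * b) := by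
      exact_mod_cast (card_filter_le _ _).trans (by simp)
    nlinarith [exp_pos (-(r * δ ^ 2) / 8), pow_pos (two_pos : (0 : ℝ) < 2) (κ * b)]
  · rw [zero_add]
    exact card_coins_le_of_lt_sum_blockWeight y t ht h2r hb hδ (not_le.1 hbad)

end Blocks

theorem inv_mul_sum_indicator_add_le {α : Type*} (P : Finset α) (p : α → Prop) [DecidablePred p]
    {M e : ℝ} (hM : 0 < M) (hP : P.Nonempty) (hp : #{t ∈ P | p t} ≤ #P * e) :
    (#P * M)⁻¹ * ∑ t ∈ P, M * ((if p t then 1 else 0) + e) ≤ 2 * e := by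
  have hP0 : (0 : ℝ) < #P := by exact_mod_cast hP.card_pos
  rw [← mul_sum, sum_add_distrib, sum_boole, sum_const, nsmul_eq_mul, mul_inv, mul_assoc,
    inv_mul_cancel_left₀ hM.ne', inv_mul_le_iff₀ hP0]
  linarith

theorem statement19_general (κ b r : ℕ) (hb : 0 < b)
    (α δ : ℝ) (hα2 : α ≤ 1 / 2) (hr : (r : ℝ) = α * κ) (hδ : 0 < δ)
    (y : Fin κ × Fin b → Bool) :
    (((Finset.powersetCard r (Finset.univ : Finset (Fin κ))).card * 2 ^ (κ * b) : ℝ))⁻¹ *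
      ∑ t ∈ Finset.powersetCard r (Finset.univ : Finset (Fin κ)),
        ∑ c : Fin κ × Fin b → Bool,
          (if wgt y (Finset.univ.filter fun i : Fin κ × Fin b => i.1 ∈ t ∧ c i) /
                ((Finset.univ.filter fun i : Fin κ × Fin b => i.1 ∈ t ∧ c i).card : ℝ) ≤
              wgt y (Finset.univ.filter fun i : Fin κ × Fin b => i.1 ∉ t) /
                ((1 - α) * ((κ : ℝ) * b)) - δ
           then (1 : ℝ) else 0)
      ≤ 3 * Real.exp (-(α * κ * δ ^ 2) / 16) := by
  have h2r : 2 * r ≤ κ := by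
    have : (2 * r : ℝ) ≤ κ := by rw [hr]; nlinarith [(Nat.cast_nonneg κ : (0 : ℝ) ≤ κ)]
    exact_mod_cast this
  have hcompl : (1 - α) * ((κ : ℝ) * b) = (κ - r) * b := by rw [hr]; ring
  have hP : (powersetCard r (univ : Finset (Fin κ))).Nonempty :=
    powersetCard_nonempty.2 (by rw [card_univ, Fintype.card_fin]; omega)
  have hbad := card_sum_blockWeight_le_le y r hb hδ.le
  simp only [hcompl]
  calc _ ≤ (#(powersetCard r univ) * 2 ^ (κ * b) : ℝ)⁻¹ * ∑ t ∈ powersetCard r univ,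
        2 ^ (κ * b) * ((if ∑ j ∈ t, blockWeight y j ≤ r * ((∑ j, blockWeight y j) / κ - b * δ / 4)
          then 1 else 0) + exp (-(r * δ ^ 2) / 8)) := by
        gcongr with t ht
        exact sum_coins_indicator_le y t (mem_powersetCard.1 ht).2 h2r hb hδ.le
    _ ≤ 2 * exp (-(r * δ ^ 2) / 8) :=
        inv_mul_sum_indicator_add_le _ _ (by positivity) hP (by simpa using hbad)
    _ ≤ 3 * exp (-(α * κ * δ ^ 2) / 16) := by
        rw [← hr]
        have : exp (-(r * δ ^ 2) / 8) ≤ exp (-(r * δ ^ 2) / 16) :=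
          exp_le_exp.2 (by linarith [mul_nonneg (Nat.cast_nonneg r) (sq_nonneg δ)])
        linarith [exp_pos (-(r * δ ^ 2) / 16)]

/-- Block sampling bound (Lemma 15): group `m = κ·b` positions into `κ` blocks of size
`b`, pick a uniform subset `t` of `[κ]` of size `r = ακ` determining the test positions
`𝒯`, and include each position of `𝒯` in `𝒯'` independently with probability 1/2.  The
probability (over `t` and the coins `c`) that the relative Hamming weight of `y` on `𝒯'`
falls below the relative weight on the complement `𝒯̄` by more than `δ` is at most
`3·exp(−ακδ²/16)`. -/
theorem statement19 (κ b r : ℕ) (hκ : 0 < κ) (hb : 0 < b)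
    (α δ : ℝ) (hα0 : 0 ≤ α) (hα2 : α ≤ 1 / 2) (hr : (r : ℝ) = α * κ) (hδ : 0 < δ)
    (y : Fin κ × Fin b → Bool) :
    (((Finset.powersetCard r (Finset.univ : Finset (Fin κ))).card * 2 ^ (κ * b) : ℝ))⁻¹ *
      ∑ t ∈ Finset.powersetCard r (Finset.univ : Finset (Fin κ)),
        ∑ c : Fin κ × Fin b → Bool,
          (if wgt y (Finset.univ.filter fun i : Fin κ × Fin b => i.1 ∈ t ∧ c i) /
                ((Finset.univ.filter fun i : Fin κ × Fin b => i.1 ∈ t ∧ c i).card : ℝ) ≤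
              wgt y (Finset.univ.filter fun i : Fin κ × Fin b => i.1 ∉ t) /
                ((1 - α) * ((κ : ℝ) * b)) - δ
           then (1 : ℝ) else 0)
      ≤ 3 * Real.exp (-(α * κ * δ ^ 2) / 16) :=
  statement19_general κ b r hb α δ hα2 hr hδ y
end
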